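/- For the matrix algebra M_n(k) over a field k, the assignment (r, s) ↦ (F(r), F(s)), where F(t)(a) = Σ t⁽¹⁾ a t⁽²⁾ for t = Σ t⁽¹⁾ ⊗ t⁽²⁾ ∈ M_n(k) ⊗ M_n(k), is a bijection between the set of associative Yang-Baxter pairs on M_n(k) and the set of coupled Rota-Baxter operators on M_n(k). -/

import Mathlib

open scoped TensorProduct

/-- `Fbil x y` is the operator `a ↦ x * a * y`. -/
noncomputable def Fbil (k A : Type*) [CommSemiring k] [Ring A] [Algebra k A] :
    A →ₗ[k] A →ₗ[k] (A →ₗ[k] A) :=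
  LinearMap.mk₂ k (fun x y => (LinearMap.mulLeft k x).comp (LinearMap.mulRight k y))
    (fun x x' y => by ext a; simp [add_mul])
    (fun c x y => by ext a; simp [smul_mul_assoc])
    (fun x y y' => by ext a; simp [mul_add])
    (fun c x y => by ext a; simp [mul_smul_comm])

/-- `F2 (Σ x ⊗ y)` is the operator `a ↦ Σ x * a * y`. -/
noncomputable def F2 (k A : Type*) [CommSemiring k] [Ring A] [Algebra k A] :
    A ⊗[k] A →ₗ[k] (A →ₗ[k] A) :=
  TensorProduct.lift (Fbil k A)

/-- `r ↦ r¹² = r ⊗ 1`. -/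
noncomputable def e12 (k A : Type*) [CommSemiring k] [Ring A] [Algebra k A] :
    A ⊗[k] A →ₐ[k] (A ⊗[k] A) ⊗[k] A :=
  Algebra.TensorProduct.includeLeft

/-- `a ⊗ b ↦ (a ⊗ b)¹³ = a ⊗ 1 ⊗ b`. -/
noncomputable def e13 (k A : Type*) [CommSemiring k] [Ring A] [Algebra k A] :
    A ⊗[k] A →ₐ[k] (A ⊗[k] A) ⊗[k] A :=
  Algebra.TensorProduct.map Algebra.TensorProduct.includeLeft (AlgHom.id k A)

/-- `r ↦ r²³ = 1 ⊗ r`. -/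
noncomputable def e23 (k A : Type*) [CommSemiring k] [Ring A] [Algebra k A] :
    A ⊗[k] A →ₐ[k] (A ⊗[k] A) ⊗[k] A :=
  Algebra.TensorProduct.map Algebra.TensorProduct.includeRight (AlgHom.id k A)

/-!
Writing `F3 t` for the bilinear operator `(a, b) ↦ Σ t⁽¹⁾ a t⁽²⁾ b t⁽³⁾` attached to
`t ∈ A ⊗ A ⊗ A`, the products `u¹³r¹²`, `u¹²v²³` and `v²³u¹³` go to
`(a, b) ↦ u(r a · b)`, `u a · v b` and `u(a · v b)`, so `F3` carries the two Yang–Baxter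
expressions to the defects of the two coupled Rota–Baxter identities. When `F2` is bijective
(for `Mₙ(k)` this is `Mₙ(k) ⊗ Mₙ(k)ᵐᵒᵖ ≃ End Mₙ(k)`) and `A` is finite projective, `F3` is
injective, being `F2 ⊗ id` followed by `End A ⊗ A ≃ Hom(A, A ⊗ A)` and composition with `F2`;
so the two systems of equations are equivalent.
-/

section

variable {k A : Type*} [CommSemiring k] [Ring A] [Algebra k A]

@[simp] lemma F2_tmul (x y a : A) : F2 k A (x ⊗ₜ y) a = x * a * y := by
  simp [F2, Fbil, mul_assoc]

lemma F2_eq_mulLeftRight_comp :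
    F2 k A = (AlgHom.mulLeftRight k A).toLinearMap ∘ₗ
      (LinearEquiv.lTensor A (MulOpposite.opLinearEquiv k)).toLinearMap := by
  ext x y a
  simp

lemma F2_bijective_of_mulLeftRight_bijective (h : Function.Bijective (AlgHom.mulLeftRight k A)) :
    Function.Bijective (F2 k A) := by
  rw [F2_eq_mulLeftRight_comp, LinearMap.coe_comp]
  exact h.comp (LinearEquiv.bijective _)

variable (k A) in
noncomputable def F3 : (A ⊗[k] A) ⊗[k] A →ₗ[k] A →ₗ[k] A →ₗ[k] A :=
  LinearMap.compRight k (F2 k A) ∘ₗ TensorProduct.rTensorHomToHomRTensor (.id k) A A A ∘ₗ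
    LinearMap.rTensor A (F2 k A)

@[simp] lemma F3_tmul (x y z a b : A) : F3 k A (x ⊗ₜ y ⊗ₜ z) a b = x * a * y * b * z := by
  simp [F3]

lemma F3_e13_mul_e12 (u r : A ⊗[k] A) (a b : A) :
    F3 k A (e13 k A u * e12 k A r) a b = F2 k A u (F2 k A r a * b) := by
  induction u using TensorProduct.induction_on with
  | zero => simp
  | add u u' hu hu' => simp [add_mul, hu, hu']
  | tmul x y =>
    induction r using TensorProduct.induction_on with
    | zero => simp
    | add r r' hr hr' => simp [mul_add, add_mul, hr, hr']
    | tmul x' y' => simp [e13, e12, mul_assoc]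

lemma F3_e12_mul_e23 (u v : A ⊗[k] A) (a b : A) :
    F3 k A (e12 k A u * e23 k A v) a b = F2 k A u a * F2 k A v b := by
  induction u using TensorProduct.induction_on with
  | zero => simp
  | add u u' hu hu' => simp [add_mul, hu, hu']
  | tmul x y =>
    induction v using TensorProduct.induction_on with
    | zero => simp
    | add v v' hv hv' => simp [mul_add, hv, hv']
    | tmul x' y' => simp [e12, e23, mul_assoc]

lemma F3_e23_mul_e13 (v u : A ⊗[k] A) (a b : A) :
    F3 k A (e23 k A v * e13 k A u) a b = F2 k A u (a * F2 k A v b) := by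
  induction v using TensorProduct.induction_on with
  | zero => simp
  | add v v' hv hv' => simp [add_mul, mul_add, hv, hv']
  | tmul x y =>
    induction u using TensorProduct.induction_on with
    | zero => simp
    | add u u' hu hu' => simp [mul_add, hu, hu']
    | tmul x' y' => simp [e23, e13, mul_assoc]

lemma F3_yangBaxter (u r v : A ⊗[k] A) (a b : A) :
    F3 k A (e13 k A u * e12 k A r - e12 k A u * e23 k A u + e23 k A v * e13 k A u) a b =
      F2 k A u (F2 k A r a * b + a * F2 k A v b) - F2 k A u a * F2 k A u b := by
  simp only [map_add, map_sub, LinearMap.add_apply, LinearMap.sub_apply, F3_e13_mul_e12,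
    F3_e12_mul_e23, F3_e23_mul_e13]
  abel

lemma F3_injective [Module.Projective k A] [Module.Finite k A]
    (hF : Function.Bijective (F2 k A)) : Function.Injective (F3 k A) := by
  have hcomp : Function.Injective (LinearMap.compRight k (M := A) (F2 k A)) :=
    fun f g hfg => LinearMap.ext fun a => hF.1 (LinearMap.congr_fun hfg a)
  have hhom : Function.Injective (TensorProduct.rTensorHomToHomRTensor (.id k) A A A) := by
    rw [← rTensorHomEquivHomRTensor_toLinearMap]
    exact (rTensorHomEquivHomRTensor k A A A).injective
  have hrT : Function.Injective (LinearMap.rTensor A (F2 k A)) :=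
    ((LinearEquiv.ofBijective _ hF).rTensor A).injective
  exact hcomp.comp (hhom.comp hrT)

lemma yangBaxter_eq_zero_iff [Module.Projective k A] [Module.Finite k A]
    (hF : Function.Bijective (F2 k A)) (u r v : A ⊗[k] A) :
    e13 k A u * e12 k A r - e12 k A u * e23 k A u + e23 k A v * e13 k A u = 0 ↔
      ∀ a b, F2 k A u a * F2 k A u b = F2 k A u (F2 k A r a * b + a * F2 k A v b) := by
  rw [← (F3_injective hF).eq_iff, map_zero]
  simp only [LinearMap.ext_iff, F3_yangBaxter, LinearMap.zero_apply, sub_eq_zero]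
  exact forall₂_congr fun a b => eq_comm

def IsAssocYangBaxterPair (r s : A ⊗[k] A) : Prop :=
  e13 k A r * e12 k A r - e12 k A r * e23 k A r + e23 k A s * e13 k A r = 0 ∧
    e13 k A s * e12 k A r - e12 k A s * e23 k A s + e23 k A s * e13 k A s = 0

def IsCoupledRotaBaxter (R S : A →ₗ[k] A) : Prop :=
  ∀ a b, R a * R b = R (R a * b + a * S b) ∧ S a * S b = S (R a * b + a * S b)

lemma isAssocYangBaxterPair_iff [Module.Projective k A] [Module.Finite k A]
    (hF : Function.Bijective (F2 k A)) (r s : A ⊗[k] A) :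
    IsAssocYangBaxterPair r s ↔ IsCoupledRotaBaxter (F2 k A r) (F2 k A s) := by
  simp only [IsAssocYangBaxterPair, IsCoupledRotaBaxter, yangBaxter_eq_zero_iff hF, ← forall_and]

theorem bijOn_F2_isAssocYangBaxterPair [Module.Projective k A] [Module.Finite k A]
    (hF : Function.Bijective (F2 k A)) :
    Set.BijOn (Prod.map (F2 k A) (F2 k A)) {p | IsAssocYangBaxterPair p.1 p.2}
      {q | IsCoupledRotaBaxter q.1 q.2} := by
  convert (hF.prodMap hF).bijOn_preimage using 1
  ext ⟨r, s⟩
  exact isAssocYangBaxterPair_iff hF r s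

end

lemma F2_matrix_bijective (k ι : Type*) [CommRing k] [Fintype ι] [DecidableEq ι] :
    Function.Bijective (F2 k (Matrix ι ι k)) :=
  F2_bijective_of_mulLeftRight_bijective <| Function.bijective_iff_has_inverse.mpr
    ⟨(AlgHom.mulLeftRightMatrix_inv k ι : _ → _),
      DFunLike.congr_fun (AlgHom.mulLeftRightMatrix.inv_comp k ι),
      DFunLike.congr_fun (AlgHom.mulLeftRightMatrix.comp_inv k ι)⟩

/-- On the matrix algebra `Mₙ(k)`, `(r, s) ↦ (F2 r, F2 s)` is a bijection from the set of
associative Yang–Baxter pairs onto the set of coupled Rota–Baxter operators. -/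
theorem stmt3 (k : Type*) [Field k] (n : ℕ) :
    Set.BijOn
      (fun p : (Matrix (Fin n) (Fin n) k ⊗[k] Matrix (Fin n) (Fin n) k) ×
               (Matrix (Fin n) (Fin n) k ⊗[k] Matrix (Fin n) (Fin n) k) =>
        (F2 k (Matrix (Fin n) (Fin n) k) p.1, F2 k (Matrix (Fin n) (Fin n) k) p.2))
      {p | e13 k _ p.1 * e12 k _ p.1 - e12 k _ p.1 * e23 k _ p.1 + e23 k _ p.2 * e13 k _ p.1 = 0 ∧
           e13 k _ p.2 * e12 k _ p.1 - e12 k _ p.2 * e23 k _ p.2 + e23 k _ p.2 * e13 k _ p.2 = 0}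
      {q : (Matrix (Fin n) (Fin n) k →ₗ[k] Matrix (Fin n) (Fin n) k) ×
           (Matrix (Fin n) (Fin n) k →ₗ[k] Matrix (Fin n) (Fin n) k) |
        ∀ a b, q.1 a * q.1 b = q.1 (q.1 a * b + a * q.2 b) ∧
               q.2 a * q.2 b = q.2 (q.1 a * b + a * q.2 b)} :=
  bijOn_F2_isAssocYangBaxterPair (F2_matrix_bijective k (Fin n))
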